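/- For ξ = ξ3 E3* + η3 A3* + (n/2)(2W1* − E1*) + (n'/2)(2W2* − E2*) with ξ3 < 0 and n, n' > 0, the stabilizer subalgebra g_ξ = {x ∈ g : ξ([x,y]) = 0 for all y ∈ g} equals span{W1, W2}. If instead ξ3 = 0, then E3 ∈ g_ξ, so dim g_ξ ≥ 3. -/

import Mathlib

open Matrix

attribute [local instance] LieRing.ofAssociativeRing

abbrev M6 := Matrix (Fin 6) (Fin 6) ℝ

noncomputable def E1 : M6 := !![0,0,0,1,0,0; 0,0,0,0,0,0; 0,0,0,0,0,0; 0,0,0,0,0,0; 0,0,0,0,0,0; 0,0,0,0,0,0]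
noncomputable def E2 : M6 := !![0,0,0,0,0,0; 0,0,0,0,1,0; 0,0,0,0,0,0; 0,0,0,0,0,0; 0,0,0,0,0,0; 0,0,0,0,0,0]
noncomputable def E3 : M6 := !![0,0,0,0,0,0; 0,0,0,0,0,0; 0,0,0,0,0,1; 0,0,0,0,0,0; 0,0,0,0,0,0; 0,0,0,0,0,0]
noncomputable def E31 : M6 := !![0,0,0,0,0,1; 0,0,0,0,0,0; 0,0,0,1,0,0; 0,0,0,0,0,0; 0,0,0,0,0,0; 0,0,0,0,0,0]
noncomputable def E32 : M6 := !![0,0,0,0,0,0; 0,0,0,0,0,1; 0,0,0,0,1,0; 0,0,0,0,0,0; 0,0,0,0,0,0; 0,0,0,0,0,0]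
noncomputable def A1 : M6 := !![(1/2),0,0,0,0,0; 0,0,0,0,0,0; 0,0,0,0,0,0; 0,0,0,(-1/2),0,0; 0,0,0,0,0,0; 0,0,0,0,0,0]
noncomputable def A2 : M6 := !![0,0,0,0,0,0; 0,(1/2),0,0,0,0; 0,0,0,0,0,0; 0,0,0,0,0,0; 0,0,0,0,(-1/2),0; 0,0,0,0,0,0]
noncomputable def A3 : M6 := !![0,0,0,0,0,0; 0,0,0,0,0,0; 0,0,(1/2),0,0,0; 0,0,0,0,0,0; 0,0,0,0,0,0; 0,0,0,0,0,(-1/2)]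
noncomputable def A31 : M6 := !![0,0,0,0,0,0; 0,0,0,0,0,0; 1,0,0,0,0,0; 0,0,0,0,0,-1; 0,0,0,0,0,0; 0,0,0,0,0,0]
noncomputable def A32 : M6 := !![0,0,0,0,0,0; 0,0,0,0,0,0; 0,1,0,0,0,0; 0,0,0,0,0,0; 0,0,0,0,0,-1; 0,0,0,0,0,0]
noncomputable def W1 : M6 := !![0,0,0,-1,0,0; 0,0,0,0,0,0; 0,0,0,0,0,0; 1,0,0,0,0,0; 0,0,0,0,0,0; 0,0,0,0,0,0]
noncomputable def W2 : M6 := !![0,0,0,0,0,0; 0,0,0,0,-1,0; 0,0,0,0,0,0; 0,0,0,0,0,0; 0,1,0,0,0,0; 0,0,0,0,0,0]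

noncomputable def gens : Set M6 := {E1, E2, E3, E31, E32, A1, A2, A3, A31, A32, W1, W2}

noncomputable def gLie : LieSubalgebra ℝ M6 := LieSubalgebra.lieSpan ℝ M6 gens

/-- The linear form ξ = ξ₃E₃* + η₃A₃* + (n/2)(2W₁* − E₁*) + (n'/2)(2W₂* − E₂*) on g,
written via the matrix entries (on g one has e₃ = x 2 5, a₃ = 2·(x 2 2),
k₁ = x 3 0, e₁ = x 0 3 + x 3 0, k₂ = x 4 1, e₂ = x 1 4 + x 4 1). -/
noncomputable def xiF (ξ3 η3 nn nn' : ℝ) (x : M6) : ℝ :=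
  ξ3 * x 2 5 + 2 * η3 * x 2 2 + (nn / 2) * (x 3 0 - x 0 3) + (nn' / 2) * (x 4 1 - x 1 4)

lemma xiF_add (ξ3 η3 nn nn' : ℝ) (x y : M6) :
    xiF ξ3 η3 nn nn' (x + y) = xiF ξ3 η3 nn nn' x + xiF ξ3 η3 nn nn' y := by
  simp only [xiF, Matrix.add_apply]; ring

lemma xiF_smul (ξ3 η3 nn nn' : ℝ) (c : ℝ) (x : M6) :
    xiF ξ3 η3 nn nn' (c • x) = c * xiF ξ3 η3 nn nn' x := by
  simp only [xiF, Matrix.smul_apply, smul_eq_mul]; ring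

lemma xiF_zero (ξ3 η3 nn nn' : ℝ) : xiF ξ3 η3 nn nn' (0 : M6) = 0 := by
  simp [xiF]

/-- The stabilizer g_ξ = {x ∈ g : ξ([x,y]) = 0 for all y ∈ g}. -/
noncomputable def stab (ξ3 η3 nn nn' : ℝ) : Submodule ℝ M6 where
  carrier := {x | x ∈ gLie ∧ ∀ y ∈ gLie, xiF ξ3 η3 nn nn' ⁅x, y⁆ = 0}
  zero_mem' := ⟨gLie.zero_mem, fun y _ => by rw [zero_lie]; exact xiF_zero _ _ _ _⟩
  add_mem' := fun hx hy => ⟨gLie.add_mem hx.1 hy.1, fun y hyg => by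
    rw [add_lie, xiF_add, hx.2 y hyg, hy.2 y hyg, add_zero]⟩
  smul_mem' := fun c x hx => ⟨gLie.smul_mem c hx.1, fun y hyg => by
    rw [smul_lie, xiF_smul, hx.2 y hyg, mul_zero]⟩


/-!
Every element of `g` is skew-adjoint for the standard symplectic form and preserves the
coordinate subspaces `⟨e₀, e₂, e₃⟩` and `⟨e₁, e₂, e₄⟩`; these linear conditions cut out a Lie
subalgebra, so `g` lies in it and each `x ∈ g` is determined by twelve of its entries. Pairing
`ξ([x, y])` against the generators `y` then gives ten equations which, when `ξ₃, n, n' ≠ 0`, kill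
every entry except the `W₁`- and `W₂`-coordinates. Conversely `ad W₁` and `ad W₂` map all matrices
into the kernel of `ξ`, and for `ξ₃ = 0` so does `ad E₃` on `g`.
-/

open Submodule

noncomputable def symplecticJ6 : M6 :=
  !![0,0,0,1,0,0; 0,0,0,0,1,0; 0,0,0,0,0,1; -1,0,0,0,0,0; 0,-1,0,0,0,0; 0,0,-1,0,0,0]

/-- `x.BlockTriangular blockIdx₁` says that `x` maps `⟨e₀, e₂, e₃⟩` into itself. -/
def blockIdx₁ : Fin 6 → ℕ := ![0, 1, 0, 0, 1, 1]

/-- `x.BlockTriangular blockIdx₂` says that `x` maps `⟨e₁, e₂, e₄⟩` into itself. -/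
def blockIdx₂ : Fin 6 → ℕ := ![1, 0, 0, 1, 0, 1]

noncomputable def gAmbient : LieSubalgebra ℝ M6 :=
  skewAdjointMatricesLieSubalgebra symplecticJ6 ⊓
    lieSubalgebraOfSubalgebra ℝ M6 (blockTriangularSubalgebra ℝ ℝ blockIdx₁) ⊓
    lieSubalgebraOfSubalgebra ℝ M6 (blockTriangularSubalgebra ℝ ℝ blockIdx₂)

lemma mem_gAmbient {x : M6} :
    x ∈ gAmbient ↔ symplecticJ6.IsSkewAdjoint x ∧ x.BlockTriangular blockIdx₁ ∧
      x.BlockTriangular blockIdx₂ := by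
  simp only [gAmbient, LieSubalgebra.mem_inf, mem_skewAdjointMatricesLieSubalgebra,
    mem_skewAdjointMatricesSubmodule, and_assoc]
  rfl

set_option maxHeartbeats 1000000 in
lemma gLie_le_gAmbient : gLie ≤ gAmbient := by
  refine LieSubalgebra.lieSpan_le.mpr fun y hy => ?_
  simp only [gens, Set.mem_insert_iff, Set.mem_singleton_iff] at hy
  rw [SetLike.mem_coe, mem_gAmbient]
  rcases hy with rfl | rfl | rfl | rfl | rfl | rfl | rfl | rfl | rfl | rfl | rfl | rfl <;>
    simp [Matrix.IsSkewAdjoint, Matrix.IsAdjointPair, BlockTriangular, symplecticJ6, blockIdx₁,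
      blockIdx₂, E1, E2, E3, E31, E32, A1, A2, A3, A31, A32, W1, W2, ← Matrix.ext_iff,
      Fin.forall_fin_succ, Matrix.mul_apply, Fin.sum_univ_six, neg_div, one_div]

noncomputable def ofEntries (p00 p03 p05 p11 p14 p15 p20 p21 p22 p25 p30 p41 : ℝ) : M6 :=
  !![p00, 0, 0, p03, 0, p05;
     0, p11, 0, 0, p14, p15;
     p20, p21, p22, p05, p15, p25;
     p30, 0, 0, -p00, 0, -p20;
     0, p41, 0, 0, -p11, -p21;
     0, 0, 0, 0, 0, -p22]

lemma exists_eq_ofEntries {x : M6} (hx : x ∈ gAmbient) :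
    ∃ p00 p03 p05 p11 p14 p15 p20 p21 p22 p25 p30 p41,
      x = ofEntries p00 p03 p05 p11 p14 p15 p20 p21 p22 p25 p30 p41 := by
  obtain ⟨hJ, h₁, h₂⟩ := mem_gAmbient.mp hx
  have entry (i j : Fin 6) := congrFun₂ hJ i j
  obtain ⟨h33, h44, h55, h23, h24, h35, h45⟩ :
      x 3 3 = -x 0 0 ∧ x 4 4 = -x 1 1 ∧ x 5 5 = -x 2 2 ∧ x 2 3 = x 0 5 ∧ x 2 4 = x 1 5 ∧
        x 3 5 = -x 2 0 ∧ x 4 5 = -x 2 1 := by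
    simp only [symplecticJ6, Matrix.mul_apply, Fin.sum_univ_six] at entry
    refine ⟨neg_eq_iff_eq_neg.mp ?_, neg_eq_iff_eq_neg.mp ?_, neg_eq_iff_eq_neg.mp ?_, ?_, ?_,
      neg_eq_iff_eq_neg.mp ?_, neg_eq_iff_eq_neg.mp ?_⟩ <;> symm
    · simpa using entry 0 3
    · simpa using entry 1 4
    · simpa using entry 2 5
    · simpa using entry 5 3
    · simpa using entry 5 4
    · simpa using entry 0 5
    · simpa using entry 1 5
  refine ⟨x 0 0, x 0 3, x 0 5, x 1 1, x 1 4, x 1 5, x 2 0, x 2 1, x 2 2, x 2 5, x 3 0, x 4 1,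
    ?_⟩
  ext i j
  fin_cases i <;> fin_cases j <;>
    first | rfl | assumption | exact h₁ (by decide) | exact h₂ (by decide)

lemma xiF_lie_W1 (ξ3 η3 nn nn' : ℝ) (y : M6) : xiF ξ3 η3 nn nn' ⁅W1, y⁆ = 0 := by
  simp only [Ring.lie_def, xiF, Matrix.sub_apply, mul_apply, Fin.sum_univ_six, W1, of_apply,
    cons_val]
  ring

lemma xiF_lie_W2 (ξ3 η3 nn nn' : ℝ) (y : M6) : xiF ξ3 η3 nn nn' ⁅W2, y⁆ = 0 := by
  simp only [Ring.lie_def, xiF, Matrix.sub_apply, mul_apply, Fin.sum_univ_six, W2, of_apply,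
    cons_val]
  ring

lemma W1_mem_stab (ξ3 η3 nn nn' : ℝ) : W1 ∈ stab ξ3 η3 nn nn' :=
  ⟨LieSubalgebra.subset_lieSpan (by simp [gens]), fun y _ => xiF_lie_W1 ξ3 η3 nn nn' y⟩

lemma W2_mem_stab (ξ3 η3 nn nn' : ℝ) : W2 ∈ stab ξ3 η3 nn nn' :=
  ⟨LieSubalgebra.subset_lieSpan (by simp [gens]), fun y _ => xiF_lie_W2 ξ3 η3 nn nn' y⟩

lemma ofEntries_mem_span_W1_W2 {ξ3 η3 nn nn' : ℝ} (hξ3 : ξ3 ≠ 0) (hn : nn ≠ 0)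
    (hn' : nn' ≠ 0) {p00 p03 p05 p11 p14 p15 p20 p21 p22 p25 p30 p41 : ℝ}
    (h : ∀ y ∈ gens,
      xiF ξ3 η3 nn nn' ⁅ofEntries p00 p03 p05 p11 p14 p15 p20 p21 p22 p25 p30 p41, y⁆ = 0) :
    ofEntries p00 p03 p05 p11 p14 p15 p20 p21 p22 p25 p30 p41 ∈ span ℝ {W1, W2} := by
  -- one equation from each of `E1, E2, E3, E31, E32, A1, A2, A3, A31, A32`, in this order
  obtain ⟨rfl, rfl, rfl, rfl, rfl, h03, h14, rfl, rfl, rfl⟩ :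
      p00 = 0 ∧ p11 = 0 ∧ p22 = 0 ∧ p20 = 0 ∧ p21 = 0 ∧ p30 + p03 = 0 ∧
        p41 + p14 = 0 ∧ p25 = 0 ∧ p05 = 0 ∧ p15 = 0 := by
    simp [gens, Ring.lie_def, xiF, ofEntries, E1, E2, E3, E31, E32, A1, A2, A3, A31, A32, W1, W2,
      Matrix.mul_apply, Fin.sum_univ_six, hξ3, hn, hn'] at h
    ring_nf at h
    simpa [hξ3] using h
  obtain rfl : p03 = -p30 := by linarith
  obtain rfl : p14 = -p41 := by linarith
  refine mem_span_pair.mpr ⟨p30, p41, ?_⟩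
  ext i j
  fin_cases i <;> fin_cases j <;> simp [ofEntries, W1, W2]

lemma stab_le_span_W1_W2 {ξ3 η3 nn nn' : ℝ} (hξ3 : ξ3 ≠ 0) (hn : nn ≠ 0)
    (hn' : nn' ≠ 0) :
    stab ξ3 η3 nn nn' ≤ span ℝ {W1, W2} := by
  rintro x ⟨hxg, hx⟩
  obtain ⟨p00, p03, p05, p11, p14, p15, p20, p21, p22, p25, p30, p41, rfl⟩ :=
    exists_eq_ofEntries (gLie_le_gAmbient hxg)
  exact ofEntries_mem_span_W1_W2 hξ3 hn hn' fun y hy => hx y (LieSubalgebra.subset_lieSpan hy)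

lemma E3_mem_stab (η3 nn nn' : ℝ) : E3 ∈ stab 0 η3 nn nn' := by
  refine ⟨LieSubalgebra.subset_lieSpan (by simp [gens]), fun y hy => ?_⟩
  obtain ⟨p00, p03, p05, p11, p14, p15, p20, p21, p22, p25, p30, p41, rfl⟩ :=
    exists_eq_ofEntries (gLie_le_gAmbient hy)
  simp [Ring.lie_def, xiF, ofEntries, E3]

lemma linearIndependent_E3_W1_W2 : LinearIndependent ℝ ![E3, W1, W2] := by
  rw [Fintype.linearIndependent_iff]
  intro c hc i
  fin_cases i
  · simpa [Fin.sum_univ_three, E3, W1, W2] using congrFun₂ hc 2 5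
  · simpa [Fin.sum_univ_three, E3, W1, W2] using congrFun₂ hc 3 0
  · simpa [Fin.sum_univ_three, E3, W1, W2] using congrFun₂ hc 4 1

lemma three_le_finrank_stab (η3 nn nn' : ℝ) : 3 ≤ Module.finrank ℝ (stab 0 η3 nn nn') := by
  have hle : span ℝ (Set.range ![E3, W1, W2]) ≤ stab 0 η3 nn nn' := by
    refine span_le.mpr (Set.range_subset_iff.mpr fun i => ?_)
    fin_cases i
    exacts [E3_mem_stab η3 nn nn', W1_mem_stab 0 η3 nn nn', W2_mem_stab 0 η3 nn nn']
  calc 3 = Module.finrank ℝ (span ℝ (Set.range ![E3, W1, W2])) := by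
        rw [finrank_span_eq_card linearIndependent_E3_W1_W2, Fintype.card_fin]
    _ ≤ _ := Submodule.finrank_mono hle

theorem stabilizer_of_xi (ξ3 η3 : ℝ) (n n' : ℤ) :
    (ξ3 < 0 → 0 < n → 0 < n' →
      stab ξ3 η3 (n : ℝ) (n' : ℝ) = Submodule.span ℝ ({W1, W2} : Set M6)) ∧
    (E3 ∈ stab 0 η3 (n : ℝ) (n' : ℝ) ∧
      3 ≤ Module.finrank ℝ ↥(stab 0 η3 (n : ℝ) (n' : ℝ))) := by
  refine ⟨fun hξ3 hn hn' => ?_, E3_mem_stab η3 n n', three_le_finrank_stab η3 n n'⟩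
  refine le_antisymm ?_ ?_
  · exact stab_le_span_W1_W2 hξ3.ne (by exact_mod_cast hn.ne') (by exact_mod_cast hn'.ne')
  · rw [span_le, Set.insert_subset_iff, Set.singleton_subset_iff]
    exact ⟨W1_mem_stab ξ3 η3 n n', W2_mem_stab ξ3 η3 n n'⟩
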